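/- Let p : (0,∞) → ℝ be the path-length distribution of the two-dimensional periodic Lorentz gas: p(s) = 24/π² for 0 ≤ s < 1/2, and p(s) = (24/π²) ( 1/(2s) + 2(1 − 1/(2s))² ln(1 − 1/(2s)) − (1/2)(1 − 1/s)² ln(1 − 1/s) ) for s ≥ 1/2. Then lim_{s→∞} s³ p(s) = 2/π²; in particular, p(s) ~ (2/π²) s^{−3} as s → ∞, so the second moment ∫₁^∞ s² p(s) ds diverges (logarithmically). -/

import Mathlib

/-!
With `x = 1/(2s)` one has `p(s) = (24/π²) F(x)` for
`F(x) = x + 2(1-x)² log(1-x) - ½(1-2x)² log(1-2x)`. Expanding `log(1-y)` to third order,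
the terms of order `x` and `x²` cancel and `F(x) = (2/3)x³ + O(x⁴)`, so
`p(s) ~ (24/π²)(2/3)/(8s³) = 2/(π² s³)`. All three claims follow from this equivalence, the
last one because `s² p(s) ~ (2/π²)/s` is not integrable at infinity.
-/

open MeasureTheory Filter Set
open scoped Real

noncomputable section

/-- The path-length distribution of the two-dimensional periodic Lorentz gas. -/
noncomputable def lorentzP (s : ℝ) : ℝ :=
  if s < 1 / 2 then 24 / π ^ 2
  else 24 / π ^ 2 *
    (1 / (2 * s) + 2 * (1 - 1 / (2 * s)) ^ 2 * Real.log (1 - 1 / (2 * s)) -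
      1 / 2 * (1 - 1 / s) ^ 2 * Real.log (1 - 1 / s))

open Asymptotics Topology
open Finset in
theorem Real.isBigO_log_one_sub_add_sum_range (n : ℕ) :
    (fun x : ℝ => Real.log (1 - x) + ∑ i ∈ range n, x ^ (i + 1) / (i + 1))
      =O[𝓝 0] fun x => x ^ (n + 1) := by
  refine IsBigO.of_bound 2 ?_
  filter_upwards [eventually_abs_sub_lt 0 (by norm_num : (0 : ℝ) < 1 / 2)] with x hx
  rw [sub_zero] at hx
  have hx1 : |x| < 1 := by linarith
  calc ‖Real.log (1 - x) + ∑ i ∈ range n, x ^ (i + 1) / (i + 1)‖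
      ≤ |x| ^ (n + 1) / (1 - |x|) := by
        rw [Real.norm_eq_abs, add_comm]; exact Real.abs_log_sub_add_sum_range_le hx1 n
    _ ≤ |x| ^ (n + 1) / (1 / 2) := by gcongr; linarith
    _ = 2 * ‖x ^ (n + 1)‖ := by rw [norm_pow, Real.norm_eq_abs]; ring

theorem Filter.Tendsto.mul_isBigO {α 𝕜 : Type*} [NormedField 𝕜] {l : Filter α}
    {c f g : α → 𝕜} {d : 𝕜} (hc : Tendsto c l (𝓝 d)) (hf : f =O[l] g) : (fun x => c x * f x) =O[l] g := by
  simpa using (hc.isBigO_one 𝕜).mul hf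

def lorentzProfile (x : ℝ) : ℝ :=
  x + 2 * (1 - x) ^ 2 * Real.log (1 - x) - 1 / 2 * (1 - 2 * x) ^ 2 * Real.log (1 - 2 * x)

lemma lorentzP_eq_lorentzProfile {s : ℝ} (hs : 1 / 2 ≤ s) :
    lorentzP s = 24 / π ^ 2 * lorentzProfile (1 / (2 * s)) := by
  have h2s : 2 * (1 / (2 * s)) = 1 / s := by field_simp
  rw [lorentzP, if_neg hs.not_gt, lorentzProfile, h2s]

lemma lorentzProfile_sub_isBigO :
    (fun x => lorentzProfile x - 2 / 3 * x ^ 3) =O[𝓝 0] fun x => x ^ 4 := by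
  set r : ℝ → ℝ := fun x => Real.log (1 - x) + (x + x ^ 2 / 2 + x ^ 3 / 3) with hr_def
  have hr : r =O[𝓝 0] fun x => x ^ 4 := by
    convert Real.isBigO_log_one_sub_add_sum_range 3 using 2 with x
    simp only [hr_def, Finset.sum_range_succ, Finset.sum_range_zero]
    ring
  have hr₂ : (fun x => r (2 * x)) =O[𝓝 0] fun x => x ^ 4 := by
    have h2x : Tendsto (fun x : ℝ => 2 * x) (𝓝 0) (𝓝 0) := by
      simpa using (tendsto_id (x := 𝓝 (0 : ℝ))).const_mul 2
    refine (hr.comp_tendsto h2x).trans <|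
      (isBigO_const_mul_self ((2 : ℝ) ^ 4) (fun x : ℝ => x ^ 4) _).congr_left fun x => ?_
    simp only [Function.comp_apply, mul_pow]
  have hcoeff₁ := (by fun_prop : Continuous fun x : ℝ => 2 * (1 - x) ^ 2).tendsto 0
  have hcoeff₂ := (by fun_prop : Continuous fun x : ℝ => 1 / 2 * (1 - 2 * x) ^ 2).tendsto 0
  have hcoeff₃ := (by fun_prop : Continuous fun x : ℝ => -1 + 14 / 3 * x).tendsto 0
  refine ((hcoeff₁.mul_isBigO hr).sub (hcoeff₂.mul_isBigO hr₂)).add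
    (hcoeff₃.mul_isBigO (isBigO_refl _ _)) |>.congr_left fun x => ?_
  simp only [hr_def, lorentzProfile]
  ring

lemma lorentzProfile_isEquivalent :
    lorentzProfile ~[𝓝 0] fun x => 2 / 3 * x ^ 3 :=
  lorentzProfile_sub_isBigO.trans_isLittleO <|
    (isLittleO_pow_pow (by norm_num)).trans_isBigO <|
      isBigO_self_const_mul (by norm_num) (fun x : ℝ => x ^ 3) _

lemma lorentzP_isEquivalent : lorentzP ~[atTop] fun s => 2 / π ^ 2 / s ^ 3 := by
  have hu : Tendsto (fun s : ℝ => 1 / (2 * s)) atTop (𝓝 0) :=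
    tendsto_const_nhds.div_atTop (tendsto_id.const_mul_atTop two_pos)
  refine ((IsEquivalent.refl (u := fun _ : ℝ => 24 / π ^ 2)).mul
    (lorentzProfile_isEquivalent.comp_tendsto hu)).congr_left ?_ |>.congr_right ?_
  · filter_upwards [eventually_ge_atTop (1 / 2)] with s hs
    exact (lorentzP_eq_lorentzProfile hs).symm
  · filter_upwards [eventually_gt_atTop 0] with s hs
    simp only [Pi.mul_apply, Function.comp_apply]
    field_simp
    ring

theorem not_integrableOn_Ioi_of_inv_isBigO {E : Type*} [NormedAddCommGroup E] {f : ℝ → E}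
    (a : ℝ) (hf : (fun x : ℝ => x⁻¹) =O[atTop] f) : ¬ IntegrableOn f (Ioi a) := by
  intro hint
  have hinv : IntegrableAtFilter (fun x : ℝ => x ^ (-1 : ℝ)) atTop := by
    refine (hf.congr_left fun x => (Real.rpow_neg_one x).symm).integrableAtFilter ?_
      ⟨Ioi a, Ioi_mem_atTop a, hint⟩
    exact (measurable_id.pow_const _).stronglyMeasurable.stronglyMeasurableAtFilter
  exact lt_irrefl _ (integrableAtFilter_rpow_atTop_iff.mp hinv)

/-- the Lorentz-gas path-length distribution satisfies
`s³ p(s) → 2/π²` as `s → ∞`; in particular `p(s) ~ (2/π²) s⁻³`, and its second moment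
`∫₁^∞ s² p(s) ds` diverges. -/
theorem lorentz_tail_asymptotics :
    Tendsto (fun s : ℝ => s ^ 3 * lorentzP s) atTop (nhds (2 / π ^ 2)) ∧
    Tendsto (fun s : ℝ => lorentzP s / (2 / π ^ 2 / s ^ 3)) atTop (nhds 1) ∧
    ¬ IntegrableOn (fun s : ℝ => s ^ 2 * lorentzP s) (Set.Ioi (1 : ℝ)) := by
  have hpos : ∀ᶠ s : ℝ in atTop, 0 < s := eventually_gt_atTop 0
  refine ⟨?_, ?_, ?_⟩
  · refine ((IsEquivalent.refl (u := fun s : ℝ => s ^ 3)).mul lorentzP_isEquivalent).symm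
      |>.tendsto_nhds <| tendsto_const_nhds.congr' ?_
    filter_upwards [hpos] with s hs
    simp only [Pi.mul_apply]
    field_simp
  · exact (isEquivalent_iff_tendsto_one (hpos.mono fun s hs => by positivity)).mp
      lorentzP_isEquivalent
  · refine not_integrableOn_Ioi_of_inv_isBigO 1 <|
      (isBigO_self_const_mul (c := 2 / π ^ 2) (by positivity) _ _).trans ?_
    refine IsBigO.congr' ((IsEquivalent.refl (u := fun s : ℝ => s ^ 2)).mul
      lorentzP_isEquivalent).isBigO_symm ?_ EventuallyEq.rfl
    filter_upwards [hpos] with s hs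
    simp only [Pi.mul_apply]
    field_simp
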